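/- Let $r_1, r_2 \in H^1(\mathbb{R})$ with $|r_1(k)|, |r_2(k)| < 1$ for all $k \in \mathbb{R}$, and let $\mu_\pm(k)$ denote the eigenvalues of the Hermitian matrix $I + S_H(x;k)$, namely $\mu_\pm = \frac{2 + \sigma\mathrm{Re}(r_1 r_2) \pm \sqrt{\mathrm{Re}^2(r_1 r_2) + |r_1 + \sigma\bar r_2|^2}}{2}$. Then there exists a constant $c_- > 0$, independent of $x$ and $k$, such that $\mathrm{Re}\,(g^*(I + S(x;k))g) \ge c_- g^* g$ for all $g \in \mathbb{C}^2$, all $x \in \mathbb{R}$, and all $k \in \mathbb{R}$. -/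

import Mathlib

open MeasureTheory Complex Matrix

/-- `f ∈ H¹(ℝ)`: `f ∈ L²`, `f` differentiable with derivative in `L²`. -/
def H1 (f : ℝ → ℂ) : Prop :=
  MemLp f 2 (volume : Measure ℝ) ∧ Differentiable ℝ f ∧
    MemLp (deriv f) 2 (volume : Measure ℝ)

/-- The jump matrix `S(x;k)` of the Riemann–Hilbert problem. -/
noncomputable def Smat (σ : ℝ) (r1 r2 : ℝ → ℂ) (x k : ℝ) : Matrix (Fin 2) (Fin 2) ℂ :=
  !![(σ : ℂ) * r1 k * r2 k, (σ : ℂ) * r2 k * Complex.exp (-2 * Complex.I * k * x);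
     r1 k * Complex.exp (2 * Complex.I * k * x), 0]

open Filter Topology in
lemma H1.tendsto_zero {f : ℝ → ℂ} (hf : H1 f) :
    Tendsto (fun k => ‖f k‖) (cocompact ℝ) (𝓝 0) := by
  obtain ⟨hf2, hfd, hfd2⟩ := hf
  have hfc : Continuous f := hfd.continuous
  set v : ℝ → ℂ := fun x => f x * star (f x) with hv
  set v' : ℝ → ℂ := fun x => deriv f x * star (f x) + f x * star (deriv f x) with hv'
  have hderiv : ∀ x, HasDerivAt v (v' x) x := fun x =>
    ((hfd x).hasDerivAt).mul ((hfd x).hasDerivAt).star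
  have hsqf : Integrable (fun x => ‖f x‖ ^ 2) volume :=
    (memLp_two_iff_integrable_sq_norm hf2.1).mp hf2
  have hsqd : Integrable (fun x => ‖deriv f x‖ ^ 2) volume :=
    (memLp_two_iff_integrable_sq_norm hfd2.1).mp hfd2
  have hvm : AEStronglyMeasurable v volume :=
    (hfc.mul (continuous_star.comp hfc)).aestronglyMeasurable
  have hv'm : AEStronglyMeasurable v' volume := by
    exact ((hfd2.1.mul (continuous_star.comp_aestronglyMeasurable hfc.aestronglyMeasurable))).add
      (hfc.aestronglyMeasurable.mul (continuous_star.comp_aestronglyMeasurable hfd2.1))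
  have hvint : Integrable v volume := by
    refine hsqf.mono' hvm (Eventually.of_forall fun x => ?_)
    simp [hv, norm_mul, sq]
  have hv'int : Integrable v' volume := by
    refine (hsqf.add hsqd).mono' hv'm (Eventually.of_forall fun x => ?_)
    calc ‖v' x‖ ≤ ‖deriv f x * star (f x)‖ + ‖f x * star (deriv f x)‖ := norm_add_le _ _
    _ = ‖deriv f x‖ * ‖f x‖ + ‖f x‖ * ‖deriv f x‖ := by simp [norm_mul]
    _ ≤ ‖f x‖ ^ 2 + ‖deriv f x‖ ^ 2 := by nlinarith [sq_nonneg (‖f x‖ - ‖deriv f x‖)]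
  have htop : Tendsto v atTop (𝓝 0) :=
    tendsto_zero_of_hasDerivAt_of_integrableOn_Ioi (a := 0)
      (fun x _ => hderiv x) hv'int.integrableOn hvint.integrableOn
  have hbot : Tendsto v atBot (𝓝 0) := by
    have h1 : ∀ x, HasDerivAt (fun y => v (-y)) (-(v' (-x))) x := by
      intro x
      have hneg : HasDerivAt (fun y : ℝ => -y) (-1 : ℝ) x := hasDerivAt_neg x
      have := HasDerivAt.scomp (𝕜' := ℝ) x (hderiv (-x)) hneg
      simp at this
      exact this
    have h2 : Tendsto (fun y => v (-y)) atTop (𝓝 0) :=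
      tendsto_zero_of_hasDerivAt_of_integrableOn_Ioi (a := 0)
        (fun x _ => h1 x) (hv'int.comp_neg.neg).integrableOn (hvint.comp_neg).integrableOn
    have := h2.comp tendsto_neg_atBot_atTop
    have he : ((fun y => v (-y)) ∘ Neg.neg) = v := by funext y; simp
    rwa [he] at this
  have hcoc : Tendsto v (cocompact ℝ) (𝓝 0) := by
    rw [cocompact_eq_atBot_atTop]
    exact tendsto_sup.mpr ⟨hbot, htop⟩
  have := (Real.continuous_sqrt.comp Complex.continuous_re).tendsto (0 : ℂ) |>.comp hcoc
  have heq : (fun k => Real.sqrt ((v k).re)) = fun k => ‖f k‖ := by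
    funext k
    have hk : v k = ((Complex.normSq (f k) : ℝ) : ℂ) := Complex.mul_conj (f k)
    rw [hk, Complex.ofReal_re, ← Complex.norm_def]
  have final : Tendsto (fun k => Real.sqrt ((v k).re)) (cocompact ℝ)
      (𝓝 (Real.sqrt ((0:ℂ).re))) := this
  rw [heq] at final
  simpa using final

open Filter Topology in
lemma bound_of_tendsto {f : ℝ → ℂ}
    (hc : Continuous f)
    (ht : Tendsto (fun k => ‖f k‖) (cocompact ℝ) (𝓝 0))
    (h1 : ∀ k, ‖f k‖ < 1) : ∃ s, 0 ≤ s ∧ s < 1 ∧ ∀ k, ‖f k‖ ≤ s := by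
  have hev : ∀ᶠ k in cocompact ℝ, ‖f k‖ < 1/2 :=
    ht.eventually_lt_const (by norm_num)
  rw [Filter.eventually_iff, mem_cocompact] at hev
  obtain ⟨K, hK, hKs⟩ := hev
  have hK' : IsCompact (insert (0:ℝ) K) := hK.insert 0
  obtain ⟨z, hz, hmax⟩ := hK'.exists_isMaxOn (Set.insert_nonempty _ _)
    ((continuous_norm.comp hc).continuousOn)
  refine ⟨max ‖f z‖ (1/2), le_max_of_le_right (by norm_num),
    max_lt (h1 z) (by norm_num), fun k => ?_⟩
  by_cases hk : k ∈ insert (0:ℝ) K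
  · exact le_max_of_le_left (hmax hk)
  · have : k ∈ Kᶜ := fun h => hk (Set.mem_insert_of_mem _ h)
    exact le_max_of_le_right (le_of_lt (hKs this))

lemma real_key (s c w m t u : ℝ) (hs0 : 0 ≤ s) (hs1 : s < 1) (hc : c = (1-s)/3)
    (hw : -s^2 ≤ w) (hm : 0 ≤ m) (hm2 : m^2 ≤ 2*s^2 + 2*w) (ht : 0 ≤ t) (hu : 0 ≤ u) :
    c * (t^2 + u^2) ≤ (1+w)*t^2 + u^2 - m*t*u := by
  have hX : (0:ℝ) < 1 + w - c := by nlinarith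
  have hY : (0:ℝ) < 1 - c := by nlinarith
  have hXY : m^2 ≤ 4*(1+w-c)*(1-c) := by
    nlinarith [sq_nonneg s, sq_nonneg (1-s), mul_nonneg (mul_nonneg hs0 hs0) (sub_nonneg.2 hs1.le)]
  have key : 0 ≤ 4*(1+w-c)*((1+w-c)*t^2 + (1-c)*u^2 - m*t*u) := by
    nlinarith [sq_nonneg (2*(1+w-c)*t - m*u),
      mul_nonneg (by linarith : (0:ℝ) ≤ 4*(1+w-c)*(1-c) - m^2) (sq_nonneg u)]
  have h4 : (0:ℝ) < 4*(1+w-c) := by linarith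
  have hpos : 0 ≤ (1+w-c)*t^2 + (1-c)*u^2 - m*t*u := nonneg_of_mul_nonneg_right key h4
  linarith

lemma complex_key (σ : ℝ) (hσ : σ = 1 ∨ σ = -1) (s c : ℝ) (hs0 : 0 ≤ s) (hs1 : s < 1)
    (hc : c = (1-s)/3) (a b R1 R2 E : ℂ) (hE : ‖E‖ = 1) (h1 : ‖R1‖ ≤ s) (h2 : ‖R2‖ ≤ s) :
    c * (‖a‖^2 + ‖b‖^2) ≤
      ((starRingEnd ℂ) a * a + (starRingEnd ℂ) b * b + (σ:ℂ)*R1*R2*((starRingEnd ℂ) a * a)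
        + (σ:ℂ)*R2*((starRingEnd ℂ) E)*((starRingEnd ℂ) a * b)
        + R1*E*((starRingEnd ℂ) b * a)).re := by
  set w : ℝ := σ * (R1*R2).re with hwdef
  set m : ℝ := ‖(starRingEnd ℂ) R1 + (σ:ℂ)*R2‖ with hmdef
  set z : ℂ := (((starRingEnd ℂ) R1 + (σ:ℂ)*R2) * (starRingEnd ℂ) E) * ((starRingEnd ℂ) a * b)
    with hzdef
  have na : ‖a‖^2 = a.re^2 + a.im^2 := by
    rw [Complex.sq_norm, Complex.normSq_apply]; ring
  have nb : ‖b‖^2 = b.re^2 + b.im^2 := by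
    rw [Complex.sq_norm, Complex.normSq_apply]; ring
  have hre : ((starRingEnd ℂ) a * a + (starRingEnd ℂ) b * b + (σ:ℂ)*R1*R2*((starRingEnd ℂ) a * a)
        + (σ:ℂ)*R2*((starRingEnd ℂ) E)*((starRingEnd ℂ) a * b)
        + R1*E*((starRingEnd ℂ) b * a)).re
      = (1+w)*‖a‖^2 + ‖b‖^2 + z.re := by
    rw [na, nb, hzdef, hwdef]
    simp only [Complex.add_re, Complex.mul_re, Complex.mul_im, Complex.add_im,
      Complex.conj_re, Complex.conj_im, Complex.ofReal_re, Complex.ofReal_im]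
    ring
  have hw_lb : -s^2 ≤ w := by
    have h3 : |(R1*R2).re| ≤ ‖R1*R2‖ := by
      exact Complex.abs_re_le_norm _
    have h4 : ‖R1*R2‖ ≤ s*s := by
      rw [norm_mul]; exact mul_le_mul h1 h2 (norm_nonneg _) hs0
    have h5 := abs_le.mp h3
    rcases hσ with rfl | rfl <;> rw [hwdef] <;> nlinarith
  have hid : m^2 = ‖R1‖^2 + ‖R2‖^2 + 2*w := by
    rw [hmdef, hwdef, Complex.sq_norm, Complex.normSq_add,
      Complex.sq_norm, Complex.sq_norm]
    simp only [Complex.normSq_conj, Complex.normSq_mul, Complex.normSq_ofReal,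
      Complex.mul_re, Complex.mul_im, Complex.conj_re, Complex.conj_im,
      Complex.ofReal_re, Complex.ofReal_im, Complex.normSq_apply]
    rcases hσ with rfl | rfl <;> ring
  have hm2 : m^2 ≤ 2*s^2 + 2*w := by
    have e1 : ‖R1‖^2 ≤ s^2 := by
      have := pow_le_pow_left₀ (norm_nonneg R1) h1 2
      simpa using this
    have e2 : ‖R2‖^2 ≤ s^2 := by
      have := pow_le_pow_left₀ (norm_nonneg R2) h2 2
      simpa using this
    linarith [hid]
  have hznorm : ‖z‖ = m * (‖a‖ * ‖b‖) := by
    rw [hzdef, norm_mul, norm_mul, norm_mul, RCLike.norm_conj, RCLike.norm_conj, hE, mul_one]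
  have hzre : -(m * (‖a‖ * ‖b‖)) ≤ z.re := by
    have := abs_le.mp (Complex.abs_re_le_norm z) |>.1
    rw [hznorm] at this
    linarith
  have := real_key s c w m ‖a‖ ‖b‖ hs0 hs1 hc hw_lb (norm_nonneg _) hm2
    (norm_nonneg _) (norm_nonneg _)
  rw [hre]
  nlinarith [this]

/-- For `r₁, r₂ ∈ H¹(ℝ)` with `|r₁|, |r₂| < 1`, there is a uniform constant
`c₋ > 0` with `Re(g*(I+S(x;k))g) ≥ c₋ g*g` for all `g ∈ ℂ²`, `x, k ∈ ℝ`. -/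
theorem stmt11 (σ : ℝ) (hσ : σ = 1 ∨ σ = -1) (r1 r2 : ℝ → ℂ)
    (hH1 : H1 r1) (hH2 : H1 r2)
    (hr1 : ∀ k : ℝ, ‖r1 k‖ < 1) (hr2 : ∀ k : ℝ, ‖r2 k‖ < 1) :
    ∃ c : ℝ, 0 < c ∧ ∀ (g : Fin 2 → ℂ) (x k : ℝ),
      c * (‖g 0‖ ^ 2 + ‖g 1‖ ^ 2) ≤
        (dotProduct (star g) ((1 + Smat σ r1 r2 x k).mulVec g)).re := by
  obtain ⟨s1, hs10, hs11, hb1⟩ := bound_of_tendsto hH1.2.1.continuous hH1.tendsto_zero hr1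
  obtain ⟨s2, hs20, hs21, hb2⟩ := bound_of_tendsto hH2.2.1.continuous hH2.tendsto_zero hr2
  set s : ℝ := max s1 s2 with hs
  have hs0 : 0 ≤ s := le_trans hs10 (le_max_left _ _)
  have hslt : s < 1 := max_lt hs11 hs21
  refine ⟨(1-s)/3, by linarith, fun g x k => ?_⟩
  set a : ℂ := g 0
  set b : ℂ := g 1
  set R1 : ℂ := r1 k
  set R2 : ℂ := r2 k
  set E : ℂ := Complex.exp (2 * Complex.I * k * x) with hEdef
  have hE : ‖E‖ = 1 := by
    rw [hEdef, Complex.norm_exp]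
    norm_num [Complex.mul_re, Complex.mul_im]
  have hEc : Complex.exp (-2 * Complex.I * k * x) = (starRingEnd ℂ) E := by
    rw [hEdef, ← Complex.exp_conj]
    congr 1
    simp only [_root_.map_mul, Complex.conj_I, Complex.conj_ofReal, map_ofNat]
    ring
  have hexp : dotProduct (star g) ((1 + Smat σ r1 r2 x k).mulVec g)
      = (starRingEnd ℂ) a * a + (starRingEnd ℂ) b * b + (σ:ℂ)*R1*R2*((starRingEnd ℂ) a * a)
        + (σ:ℂ)*R2*((starRingEnd ℂ) E)*((starRingEnd ℂ) a * b)
        + R1*E*((starRingEnd ℂ) b * a) := by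
    simp only [Smat, hEc, dotProduct, Matrix.mulVec, Fin.sum_univ_two,
      Matrix.add_apply, Matrix.one_apply, Pi.star_apply, RCLike.star_def,
      Matrix.cons_val', Matrix.cons_val_zero, Matrix.cons_val_one, Matrix.head_cons,
      Matrix.empty_val', Matrix.cons_val_fin_one, Matrix.head_fin_const]
    norm_num
    ring
  rw [hexp]
  exact complex_key σ hσ s ((1-s)/3) hs0 hslt rfl a b R1 R2 E hE
    (le_trans (hb1 k) (le_max_left _ _)) (le_trans (hb2 k) (le_max_right _ _))
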